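/- Let F : ℝ^d → ℝ be L-smooth, let δ ∈ (0,1), σ > 0, B > 0, ε > 0, and let 0 < η_H ≤ 1/(L √(128 log(4/δ))). Set D̄ = σ²/(4 B L²) and let r satisfy 0 < r ≤ min{ log(4/δ) η_H σ² / (2 B ε), √(2 log(4/δ) η_H σ² / (B L)) }. Let m < T be natural numbers with T − m ≥ 2, and let x_m, x_{m+1}, …, x_T ∈ ℝ^d be a sequence such that: (i) x_{m+1} = x_m + ξ for some ξ with ‖ξ‖₂ ≤ r, and there is d_m ∈ ℝ^d with ‖d_m‖₂ ≤ ε and ‖d_m − ∇F(x_m)‖₂ ≤ ε/2; (ii) for every i with m < i < T, x_{i+1} = x_i − η_i d_i with 0 < η_i ≤ η_H and ‖d_i − ∇F(x_i)‖₂² ≤ 8 log(4/δ) σ²/B; (iii) ∑_{i=m+1}^{T−1} ‖x_{i+1} − x_i‖₂² ≥ (T − m − 1) D̄. Then F(x_m) − F(x_T) ≥ (T − m) log(4/δ) η_H σ² / B. -/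

import Mathlib

/-!
The descent lemma `F y ≤ F x + ⟪∇F x, y - x⟫ + L/2 ‖y - x‖²` controls both phases. With
`Q = log(4/δ) η_H σ² / B`, the perturbation raises `F` by at most `(7/4) Q`, and, since
`L η_H ≤ 1/2`, every inexact gradient step lowers `F` by at least
`‖x_{i+1} - x_i‖² / (4 η_H) - 4 Q`. The choice of `η_H` gives `D̄ / (4 η_H) ≥ 8 Q`, so the movement
condition turns the telescoped decrease into at least `4 (T - m - 1) Q - (7/4) Q ≥ (T - m) Q`.
-/

open RealInnerProductSpace

theorem add_sum_Ico_le_add_nsmul {α : Type*} [AddCommGroup α] [PartialOrder α]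
    [IsOrderedAddMonoid α] {a b : ℕ → α} {c : α} {m n : ℕ} (hmn : m ≤ n)
    (h : ∀ i ∈ Finset.Ico m n, a (i + 1) + b i ≤ a i + c) :
    a n + ∑ i ∈ Finset.Ico m n, b i ≤ a m + (n - m) • c := by
  have hsum : ∑ i ∈ Finset.Ico m n, (a (i + 1) - a i + b i) ≤ ∑ _i ∈ Finset.Ico m n, c :=
    Finset.sum_le_sum fun i hi ↦ by
      have := h i hi
      rwa [sub_add_eq_add_sub, sub_le_iff_le_add, add_comm c]
  rw [Finset.sum_add_distrib, Finset.sum_Ico_sub a hmn, Finset.sum_const, Nat.card_Ico] at hsum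
  rw [sub_add_eq_add_sub, sub_le_iff_le_add] at hsum
  rwa [add_comm (a m)]

section Smooth

variable {E : Type*} [NormedAddCommGroup E] [InnerProductSpace ℝ E] [CompleteSpace E]
  {F : E → ℝ} {L : ℝ}

theorem le_add_inner_gradient_add_sq (hdiff : Differentiable ℝ F)
    (hlip : ∀ u v, ‖gradient F u - gradient F v‖ ≤ L * ‖u - v‖) (x y : E) :
    F y ≤ F x + ⟪gradient F x, y - x⟫ + L / 2 * ‖y - x‖ ^ 2 := by
  set v := y - x
  -- `g` is antitone on `[0, 1]` because its derivative is `⟪∇F(x + t v) - ∇F x, v⟫ - L t ‖v‖² ≤ 0`.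
  let g : ℝ → ℝ := fun t ↦ F (x + t • v) - t * ⟪gradient F x, v⟫ - L / 2 * t ^ 2 * ‖v‖ ^ 2
  have hg : ∀ t, HasDerivAt g
      (⟪gradient F (x + t • v), v⟫ - ⟪gradient F x, v⟫ - L * t * ‖v‖ ^ 2) t := by
    intro t
    have hline : HasDerivAt (fun s : ℝ ↦ x + s • v) v t := by
      simpa using ((hasDerivAt_id t).smul_const v).const_add x
    have hF := (hdiff (x + t • v)).hasGradientAt.hasFDerivAt.comp_hasDerivAt t hline
    simp only [InnerProductSpace.toDual_apply_apply] at hF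
    exact ((hF.sub ((hasDerivAt_id t).mul_const ⟪gradient F x, v⟫)).sub
      (((hasDerivAt_pow 2 t).const_mul (L / 2)).mul_const (‖v‖ ^ 2))).congr_deriv (by ring)
  have hanti : AntitoneOn g (Set.Icc 0 1) := by
    refine antitoneOn_of_hasDerivWithinAt_nonpos (convex_Icc 0 1)
      (fun t _ ↦ (hg t).continuousAt.continuousWithinAt) (fun t _ ↦ (hg t).hasDerivWithinAt) ?_
    rintro t ht
    rw [interior_Icc] at ht
    have hstep : ‖gradient F (x + t • v) - gradient F x‖ ≤ L * t * ‖v‖ := by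
      simpa [norm_smul, abs_of_pos ht.1, mul_assoc] using hlip (x + t • v) x
    calc ⟪gradient F (x + t • v), v⟫ - ⟪gradient F x, v⟫ - L * t * ‖v‖ ^ 2
        = ⟪gradient F (x + t • v) - gradient F x, v⟫ - L * t * ‖v‖ ^ 2 := by rw [inner_sub_left]
      _ ≤ L * t * ‖v‖ * ‖v‖ - L * t * ‖v‖ ^ 2 := by
        gcongr
        exact (real_inner_le_norm _ _).trans (by gcongr)
      _ = 0 := by ring
  have key := hanti (by simp) (by simp) zero_le_one
  simp only [g, v, zero_smul, add_zero, one_smul, add_sub_cancel, zero_mul, sub_zero, one_mul,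
    one_pow, mul_one, ne_eq, OfNat.ofNat_ne_zero, not_false_eq_true, zero_pow] at key
  linarith

theorem add_norm_sq_div_le_of_inexact_gradient_step (hdiff : Differentiable ℝ F)
    (hlip : ∀ u v, ‖gradient F u - gradient F v‖ ≤ L * ‖u - v‖) {η η' : ℝ} (hη : 0 < η)
    (hηη' : η ≤ η') (hLη' : L * η' ≤ 1 / 2) (x d : E) :
    F (x - η • d) + ‖η • d‖ ^ 2 / (4 * η') ≤ F x + η' / 2 * ‖d - gradient F x‖ ^ 2 := by
  have hdesc := le_add_inner_gradient_add_sq hdiff hlip x (x - η • d)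
  rw [sub_sub_cancel_left, norm_neg, inner_neg_right, real_inner_smul_right, real_inner_comm]
    at hdesc
  have hpol := norm_sub_sq_real d (gradient F x)
  have hsq : ‖η • d‖ ^ 2 = η ^ 2 * ‖d‖ ^ 2 := by rw [norm_smul, mul_pow, Real.norm_eq_abs, sq_abs]
  have hLη : L * η ≤ 1 / 2 := by
    rcases le_or_gt 0 L with hL | hL <;> nlinarith
  have hshort : η ^ 2 * ‖d‖ ^ 2 / (4 * η') ≤ η / 4 * ‖d‖ ^ 2 := by
    rw [div_le_iff₀ (by linarith)]
    nlinarith [mul_nonneg (mul_nonneg hη.le (sq_nonneg ‖d‖)) (sub_nonneg.mpr hηη')]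
  rw [hsq] at hdesc ⊢
  nlinarith [mul_nonneg hη.le (sq_nonneg ‖gradient F x‖),
    mul_nonneg (sub_nonneg.mpr hηη') (sq_nonneg ‖d - gradient F x‖),
    mul_nonneg hη.le (sq_nonneg ‖d‖)]

theorem apply_add_le_of_perturbation (hdiff : Differentiable ℝ F)
    (hlip : ∀ u v, ‖gradient F u - gradient F v‖ ≤ L * ‖u - v‖) (hL : 0 < L) {x ξ d : E}
    {ε r Q : ℝ} (hε : 0 < ε) (hd : ‖d‖ ≤ ε) (hderr : ‖d - gradient F x‖ ≤ ε / 2) (hξ : ‖ξ‖ ≤ r)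
    (hr : r ≤ min (Q / (2 * ε)) √(2 * Q / L)) :
    F (x + ξ) ≤ F x + 7 / 4 * Q := by
  have hdesc := le_add_inner_gradient_add_sq hdiff hlip x (x + ξ)
  rw [add_sub_cancel_left] at hdesc
  have hgrad : ‖gradient F x‖ ≤ 3 / 2 * ε := by
    have := norm_sub_le_norm_sub_add_norm_sub (gradient F x) d 0
    rw [sub_zero, sub_zero, norm_sub_rev] at this
    linarith
  have hr₁ : ε * r ≤ Q / 2 := by
    calc ε * r ≤ ε * (Q / (2 * ε)) := by gcongr; exact hr.trans (min_le_left _ _)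
      _ = Q / 2 := by field_simp
  have hQ : 0 ≤ Q := by nlinarith [norm_nonneg ξ]
  have hr₂ : ‖ξ‖ ^ 2 ≤ 2 * Q / L := by
    calc ‖ξ‖ ^ 2 ≤ √(2 * Q / L) ^ 2 := by gcongr; exact hξ.trans (hr.trans (min_le_right _ _))
      _ = 2 * Q / L := Real.sq_sqrt (by positivity)
  have hinner : ⟪gradient F x, ξ⟫ ≤ 3 / 4 * Q := by
    calc ⟪gradient F x, ξ⟫ ≤ ‖gradient F x‖ * ‖ξ‖ := real_inner_le_norm _ _
      _ ≤ 3 / 2 * ε * r := by gcongr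
      _ ≤ 3 / 4 * Q := by linarith
  have hquad : L / 2 * ‖ξ‖ ^ 2 ≤ Q := by
    calc L / 2 * ‖ξ‖ ^ 2 ≤ L / 2 * (2 * Q / L) := by gcongr
      _ = Q := by field_simp
  linarith

theorem apply_add_sum_sq_div_le_of_inexact_gradient_descent (hdiff : Differentiable ℝ F)
    (hlip : ∀ u v, ‖gradient F u - gradient F v‖ ≤ L * ‖u - v‖) {x d : ℕ → E} {η : ℕ → ℝ}
    {ηH e : ℝ} {m n : ℕ} (hmn : m ≤ n) (hLηH : L * ηH ≤ 1 / 2)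
    (hupd : ∀ i, m ≤ i → i < n → x (i + 1) = x i - η i • d i)
    (hstep : ∀ i, m ≤ i → i < n → 0 < η i ∧ η i ≤ ηH)
    (herr : ∀ i, m ≤ i → i < n → ‖d i - gradient F (x i)‖ ^ 2 ≤ e) :
    F (x n) + (∑ i ∈ Finset.Ico m n, ‖x (i + 1) - x i‖ ^ 2) / (4 * ηH) ≤
      F (x m) + ((n - m : ℕ) : ℝ) * (ηH / 2 * e) := by
  rw [Finset.sum_div, ← nsmul_eq_mul]
  refine add_sum_Ico_le_add_nsmul (a := fun i ↦ F (x i))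
    (b := fun i ↦ ‖x (i + 1) - x i‖ ^ 2 / (4 * ηH)) hmn fun i hi ↦ ?_
  obtain ⟨hmi, hin⟩ := Finset.mem_Ico.mp hi
  obtain ⟨hη0, hηle⟩ := hstep i hmi hin
  rw [hupd i hmi hin, sub_sub_cancel_left, norm_neg]
  calc _ ≤ F (x i) + ηH / 2 * ‖d i - gradient F (x i)‖ ^ 2 :=
        add_norm_sq_div_le_of_inexact_gradient_step hdiff hlip hη0 hηle hLηH _ _
    _ ≤ F (x i) + ηH / 2 * e := by gcongr _ + _ * ?_; exacts [by linarith, herr i hmi hin]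

end Smooth

theorem pos_and_mul_sq_le_one_of_le_one_div_mul_sqrt {a L η : ℝ} (ha : 0 < a) (hη0 : 0 < η)
    (hη : η ≤ 1 / (L * √a)) : 0 < L ∧ a * (L * η) ^ 2 ≤ 1 := by
  have hsqrt : 0 < √a := Real.sqrt_pos.mpr ha
  have hL : 0 < L := by
    by_contra! hL
    have : 1 / (L * √a) ≤ 0 := one_div_nonpos.mpr (mul_nonpos_of_nonpos_of_nonneg hL hsqrt.le)
    linarith
  refine ⟨hL, ?_⟩
  have h : η * (L * √a) ≤ 1 := (le_div_iff₀ (by positivity)).mp hη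
  calc a * (L * η) ^ 2 = (η * (L * √a)) ^ 2 := by
        rw [mul_pow, mul_pow, mul_pow, Real.sq_sqrt ha.le]; ring
    _ ≤ 1 := by rw [sq_le_one_iff₀ (by positivity)]; exact h

theorem one_lt_log_four_div {δ : ℝ} (hδ : δ ∈ Set.Ioo (0 : ℝ) 1) : 1 < Real.log (4 / δ) := by
  obtain ⟨hδ0, hδ1⟩ := hδ
  rw [Real.lt_log_iff_exp_lt (by positivity)]
  calc Real.exp 1 < 4 := Real.exp_one_lt_d9.trans (by norm_num)
    _ < 4 / δ := by rw [lt_div_iff₀ hδ0]; nlinarith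

theorem eight_mul_le_sq_div_div_of_mul_sq_le_one {ℓ η σ B L : ℝ} (hB : 0 < B) (hL : 0 < L)
    (hη : 0 < η) (h : 128 * ℓ * (L * η) ^ 2 ≤ 1) :
    8 * (ℓ * η * σ ^ 2 / B) ≤ σ ^ 2 / (4 * B * L ^ 2) / (4 * η) := by
  rw [div_div, le_div_iff₀ (by positivity)]
  calc 8 * (ℓ * η * σ ^ 2 / B) * (4 * B * L ^ 2 * (4 * η)) = 128 * ℓ * (L * η) ^ 2 * σ ^ 2 := by
        field_simp; ring
    _ ≤ 1 * σ ^ 2 := by gcongr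
    _ = σ ^ 2 := one_mul _

theorem localization_spider_general
    {dim : ℕ} (F : EuclideanSpace ℝ (Fin dim) → ℝ) (L : ℝ)
    (hdiff : Differentiable ℝ F)
    (hlip : ∀ u v, ‖gradient F u - gradient F v‖ ≤ L * ‖u - v‖)
    (δ σ B ε ηH Dbar r : ℝ)
    (hδ : δ ∈ Set.Ioo (0 : ℝ) 1) (hB : 0 < B) (hε : 0 < ε)
    (hηH0 : 0 < ηH) (hηH : ηH ≤ 1 / (L * Real.sqrt (128 * Real.log (4 / δ))))
    (hDbar : Dbar = σ ^ 2 / (4 * B * L ^ 2))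
    (hr : r ≤ min (Real.log (4 / δ) * ηH * σ ^ 2 / (2 * B * ε))
        (Real.sqrt (2 * Real.log (4 / δ) * ηH * σ ^ 2 / (B * L))))
    (m T : ℕ) (hTm : 2 ≤ T - m)
    (x : ℕ → EuclideanSpace ℝ (Fin dim))
    (d : ℕ → EuclideanSpace ℝ (Fin dim)) (η : ℕ → ℝ)
    (ξ : EuclideanSpace ℝ (Fin dim)) (hξ : ‖ξ‖ ≤ r)
    (hpert : x (m + 1) = x m + ξ)
    (hdm : ‖d m‖ ≤ ε) (hdmerr : ‖d m - gradient F (x m)‖ ≤ ε / 2)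
    (hupd : ∀ i, m < i → i < T → x (i + 1) = x i - η i • d i)
    (hstep : ∀ i, m < i → i < T → 0 < η i ∧ η i ≤ ηH)
    (herr : ∀ i, m < i → i < T →
      ‖d i - gradient F (x i)‖ ^ 2 ≤ 8 * Real.log (4 / δ) * σ ^ 2 / B)
    (hmove : ((T - m - 1 : ℕ) : ℝ) * Dbar ≤
      ∑ i ∈ Finset.Ico (m + 1) T, ‖x (i + 1) - x i‖ ^ 2) :
    ((T - m : ℕ) : ℝ) * Real.log (4 / δ) * ηH * σ ^ 2 / B ≤ F (x m) - F (x T) := by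
  set ℓ := Real.log (4 / δ)
  set Q := ℓ * ηH * σ ^ 2 / B
  have hℓ : 1 < ℓ := one_lt_log_four_div hδ
  obtain ⟨hL, hLηH_sq⟩ :=
    pos_and_mul_sq_le_one_of_le_one_div_mul_sqrt (by positivity) hηH0 hηH
  have hLηH : L * ηH ≤ 1 / 2 := by nlinarith
  have hperturb : F (x (m + 1)) ≤ F (x m) + 7 / 4 * Q := by
    rw [hpert]
    refine apply_add_le_of_perturbation hdiff hlip hL hε hdm hdmerr hξ (hr.trans_eq ?_)
    congr 1 <;> [ring; (congr 1; ring)]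
  have hescape := apply_add_sum_sq_div_le_of_inexact_gradient_descent hdiff hlip
    (show m + 1 ≤ T by omega) hLηH hupd hstep herr
  have hQ_Dbar : 8 * Q ≤ Dbar / (4 * ηH) :=
    hDbar ▸ eight_mul_le_sq_div_div_of_mul_sq_le_one hB hL hηH0 hLηH_sq
  rw [← Nat.sub_sub, show ηH / 2 * (8 * ℓ * σ ^ 2 / B) = 4 * Q by ring] at hescape
  have hk : (1 : ℝ) ≤ ((T - m - 1 : ℕ) : ℝ) := by exact_mod_cast (by omega : 1 ≤ T - m - 1)
  have hTm_cast : ((T - m : ℕ) : ℝ) = ((T - m - 1 : ℕ) : ℝ) + 1 := by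
    exact_mod_cast (by omega : T - m = T - m - 1 + 1)
  set k : ℝ := ((T - m - 1 : ℕ) : ℝ)
  have hmove_div : k * (8 * Q) ≤ (∑ i ∈ Finset.Ico (m + 1) T, ‖x (i + 1) - x i‖ ^ 2) / (4 * ηH) :=
    calc k * (8 * Q) ≤ k * (Dbar / (4 * ηH)) := by gcongr
      _ = k * Dbar / (4 * ηH) := (mul_div_assoc _ _ _).symm
      _ ≤ _ := by gcongr
  have hQ : 0 ≤ Q := by positivity
  rw [hTm_cast, show (k + 1) * ℓ * ηH * σ ^ 2 / B = (k + 1) * Q by ring]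
  linarith [mul_le_mul_of_nonneg_right hk hQ]

/-- Localization lemma for LENA-SPIDER: if the escape phase starting at step `m` with a
perturbation of radius `r` breaks at step `T` (so that the accumulated squared movement is
at least `(T − m − 1) D̄` with `D̄ = σ²/(4BL²)`), then the function value decreases by at
least `(T − m) log(4/δ) η_H σ² / B`. -/
theorem localization_spider
    {dim : ℕ} (F : EuclideanSpace ℝ (Fin dim) → ℝ) (L : ℝ)
    (hdiff : Differentiable ℝ F)
    (hlip : ∀ u v, ‖gradient F u - gradient F v‖ ≤ L * ‖u - v‖)
    (δ σ B ε ηH Dbar r : ℝ)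
    (hδ : δ ∈ Set.Ioo (0 : ℝ) 1) (hσ : 0 < σ) (hB : 0 < B) (hε : 0 < ε)
    (hηH0 : 0 < ηH) (hηH : ηH ≤ 1 / (L * Real.sqrt (128 * Real.log (4 / δ))))
    (hDbar : Dbar = σ ^ 2 / (4 * B * L ^ 2))
    (hr0 : 0 < r)
    (hr : r ≤ min (Real.log (4 / δ) * ηH * σ ^ 2 / (2 * B * ε))
        (Real.sqrt (2 * Real.log (4 / δ) * ηH * σ ^ 2 / (B * L))))
    (m T : ℕ) (hmT : m < T) (hTm : 2 ≤ T - m)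
    (x : ℕ → EuclideanSpace ℝ (Fin dim))
    (d : ℕ → EuclideanSpace ℝ (Fin dim)) (η : ℕ → ℝ)
    (ξ : EuclideanSpace ℝ (Fin dim)) (hξ : ‖ξ‖ ≤ r)
    (hpert : x (m + 1) = x m + ξ)
    (hdm : ‖d m‖ ≤ ε) (hdmerr : ‖d m - gradient F (x m)‖ ≤ ε / 2)
    (hupd : ∀ i, m < i → i < T → x (i + 1) = x i - η i • d i)
    (hstep : ∀ i, m < i → i < T → 0 < η i ∧ η i ≤ ηH)
    (herr : ∀ i, m < i → i < T →
      ‖d i - gradient F (x i)‖ ^ 2 ≤ 8 * Real.log (4 / δ) * σ ^ 2 / B)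
    (hmove : ((T - m - 1 : ℕ) : ℝ) * Dbar ≤
      ∑ i ∈ Finset.Ico (m + 1) T, ‖x (i + 1) - x i‖ ^ 2) :
    ((T - m : ℕ) : ℝ) * Real.log (4 / δ) * ηH * σ ^ 2 / B ≤ F (x m) - F (x T) :=
  localization_spider_general F L hdiff hlip δ σ B ε ηH Dbar r hδ hB hε hηH0 hηH hDbar hr m T hTm x
    d η ξ hξ hpert hdm hdmerr hupd hstep herr hmove
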